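/- In the robot domain with scenario σ1 = [comm(I0,Succ), move(I0,I1,NotVul), move(I1,I2,Vul), move(I2,I3,NotVul)] executed from S0, the following hold for the effect φ1 = Vul: the action comm(I0,Succ) at timestamp 0 is not a cause; move(I0,I1,NotVul) at timestamp 1 is a cause; move(I1,I2,Vul) at timestamp 2 is a cause; and move(I2,I3,NotVul) at timestamp 3 is not a cause. -/

import Mathlib

inductive Loc | I0 | I1 | I2 | I3
deriving DecidableEq

inductive React | Vul | NotVul | Succ
deriving DecidableEq

inductive SysAct
  | move : Loc → Loc → React → SysAct
  | comm : Loc → React → SysAct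
deriving DecidableEq

/-- A situation is the list of system actions executed so far, most recent first; `S0 = []`. -/
abbrev Sit := List SysAct

def doAct (a : SysAct) (s : Sit) : Sit := a :: s

def time (s : Sit) : ℕ := s.length

def SubHist (s1 s2 : Sit) : Prop := s1 <:+ s2

def PSubHist (s1 s2 : Sit) : Prop := s1 <:+ s2 ∧ s1 ≠ s2

def Connected (i j : Loc) : Prop :=
  (i = .I0 ∧ j = .I1) ∨ (i = .I1 ∧ j = .I0) ∨
  (i = .I1 ∧ j = .I2) ∨ (i = .I2 ∧ j = .I1) ∨
  (i = .I2 ∧ j = .I3) ∨ (i = .I3 ∧ j = .I2)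

def At : Loc → Sit → Prop
  | j, [] => j = .I0
  | j, a :: s => (∃ i e, a = .move i j e) ∨ (At j s ∧ ∀ j' e', a ≠ .move j j' e')

def VulF : Sit → Prop
  | [] => False
  | a :: s => (∃ i j, a = .move i j .Vul) ∨ VulF s

def Risky (i : Loc) (_ : Sit) : Prop := i = .I1 ∨ i = .I2

def Poss : SysAct → Sit → Prop
  | .move i j e, s => At i s ∧ Connected i j ∧
      (Risky j s → (e = .Vul ∨ e = .NotVul)) ∧ (¬ Risky j s → e = .NotVul)
  | .comm i e, s => ¬ VulF s ∧ ¬ Risky i s ∧ e = .Succ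

def CausesDirectly (a : SysAct) (ts : ℕ) (φ : Sit → Prop) (s : Sit) : Prop :=
  ∃ s_a : Sit, time s_a = ts ∧ PSubHist [] (doAct a s_a) ∧ SubHist (doAct a s_a) s ∧
    ¬ φ s_a ∧ ∀ s', SubHist (doAct a s_a) s' → SubHist s' s → φ s'

inductive Causes : SysAct → ℕ → (Sit → Prop) → Sit → Prop
  | direct {a : SysAct} {ts : ℕ} {φ : Sit → Prop} {s : Sit} :
      CausesDirectly a ts φ s → Causes a ts φ s
  | indirect {a : SysAct} {ts : ℕ} {φ : Sit → Prop} {s : Sit}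
      (a' : SysAct) (ts' : ℕ) (s' : Sit) :
      CausesDirectly a' ts' φ s → time s' = ts' → PSubHist s' s →
      Causes a ts (fun σ => Poss a' σ ∧ φ (doAct a' σ)) s' →
      Causes a ts φ s

/-- The scenario σ1, as a situation (most recent action first). -/
def sigma1 : Sit :=
  [.move .I2 .I3 .NotVul, .move .I1 .I2 .Vul, .move .I0 .I1 .NotVul, .comm .I0 .Succ]

/-! Vulnerability, once acquired, is never lost, so the only direct cause of `VulF` in σ1 is
the move into `I2` at time 2. Regressing `VulF` through that move gives "at `I1`", whose only
direct cause in the prefix of length 2 is the move into `I1` at time 1. Regressing once more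
gives "at `I0`", which already holds in `S0`, so the chain of causes ends there. -/

def Persistent (φ : Sit → Prop) : Prop := ∀ ⦃t s : Sit⦄, t <:+ s → φ t → φ s

/-- The formula the indirect rule of `Causes` passes to the earlier situation `s'`. -/
def regress (a : SysAct) (φ : Sit → Prop) : Sit → Prop := fun σ => Poss a σ ∧ φ (doAct a σ)

theorem persistent_VulF : Persistent VulF := by
  rintro t s ⟨l, rfl⟩ ht
  induction l with
  | nil => exact ht
  | cons _ _ ih => exact Or.inr ih

section CausesDirectly

variable {a a' : SysAct} {ts ts' : ℕ} {φ : Sit → Prop} {s s_a : Sit}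

theorem psubHist_nil_doAct : PSubHist [] (doAct a s) :=
  ⟨List.nil_suffix, List.cons_ne_nil a s |>.symm⟩

theorem causesDirectly_of_persistent (hφ : Persistent φ) (h : doAct a s_a <:+ s)
    (hbefore : ¬ φ s_a) (hafter : φ (doAct a s_a)) : CausesDirectly a (time s_a) φ s :=
  ⟨s_a, rfl, psubHist_nil_doAct, h, hbefore, fun _ h' _ => hφ h' hafter⟩

theorem causesDirectly_doAct (hbefore : ¬ φ s) (hafter : φ (doAct a s)) :
    CausesDirectly a (time s) φ (doAct a s) :=
  ⟨s, rfl, psubHist_nil_doAct, List.suffix_refl _, hbefore,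
    fun _ h₁ h₂ => (h₂.eq_of_length_le h₁.length_le) ▸ hafter⟩

theorem CausesDirectly.unique (h : CausesDirectly a ts φ s) (h' : CausesDirectly a' ts' φ s) :
    a = a' ∧ ts = ts' := by
  obtain ⟨s_a, rfl, -, hsuf, hbefore, hafter⟩ := h
  obtain ⟨s_b, rfl, -, hsuf', hbefore', hafter'⟩ := h'
  -- The two witnesses are suffixes of `s`, hence comparable; a strictly later one would see `φ`.
  suffices key : ∀ {b b' : SysAct} {t t' : Sit}, doAct b t <:+ doAct b' t' →
      doAct b' t' <:+ s → ¬ φ t' → (∀ s', doAct b t <:+ s' → s' <:+ s → φ s') →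
      b = b' ∧ t = t' by
    rcases List.suffix_or_suffix_of_suffix hsuf hsuf' with hle | hle
    · obtain ⟨rfl, rfl⟩ := key hle hsuf' hbefore' hafter
      exact ⟨rfl, rfl⟩
    · obtain ⟨rfl, rfl⟩ := key hle hsuf hbefore hafter'
      exact ⟨rfl, rfl⟩
  intro b b' t t' hle hsuf hbefore hafter
  rcases List.suffix_cons_iff.mp hle with heq | hlt
  · exact List.cons.inj heq
  · exact absurd (hafter t' hlt ((List.suffix_cons _ _).trans hsuf)) hbefore

theorem not_causesDirectly_singleton (hφ : φ []) {b : SysAct} :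
    ¬ CausesDirectly a ts φ [b] := by
  rintro ⟨s_a, -, -, hsuf, hbefore, -⟩
  rcases List.suffix_cons_iff.mp hsuf with heq | hnil
  · exact hbefore ((List.cons.inj heq).2 ▸ hφ)
  · simp [doAct] at hnil

end CausesDirectly

section Causes

variable {a a' : SysAct} {ts ts' : ℕ} {φ : Sit → Prop} {s : Sit}

theorem Causes.exists_causesDirectly (h : Causes a ts φ s) :
    ∃ a' ts', CausesDirectly a' ts' φ s := by
  cases h with
  | direct hd => exact ⟨_, _, hd⟩
  | indirect a' ts' _ hd _ _ _ => exact ⟨a', ts', hd⟩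

theorem not_causes_singleton (hφ : φ []) {b : SysAct} : ¬ Causes a ts φ [b] := fun h =>
  let ⟨_, _, hd⟩ := h.exists_causesDirectly
  not_causesDirectly_singleton hφ hd

theorem Causes.eq_or_causes_regress (hd : CausesDirectly a' ts' φ s) (h : Causes a ts φ s) :
    (a = a' ∧ ts = ts') ∨ Causes a ts (regress a' φ) (s.drop (time s - ts')) := by
  cases h with
  | direct hd' => exact Or.inl (hd'.unique hd)
  | indirect b tb s' hb ht hs hc =>
    obtain ⟨rfl, rfl⟩ := hb.unique hd
    subst ht
    have hs' : s' = s.drop (time s - time s') := List.suffix_iff_eq_drop.mp hs.1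
    exact Or.inr (hs' ▸ hc)

end Causes

theorem causesDirectly_VulF_sigma1 : CausesDirectly (.move .I1 .I2 .Vul) 2 VulF sigma1 :=
  causesDirectly_of_persistent (s_a := [.move .I0 .I1 .NotVul, .comm .I0 .Succ]) persistent_VulF
    ⟨[.move .I2 .I3 .NotVul], rfl⟩ (by simp [VulF]) (by simp [VulF, doAct])

theorem causesDirectly_regress_VulF :
    CausesDirectly (.move .I0 .I1 .NotVul) 1 (regress (.move .I1 .I2 .Vul) VulF)
      [.move .I0 .I1 .NotVul, .comm .I0 .Succ] :=
  causesDirectly_doAct (s := [.comm .I0 .Succ]) (by simp [regress, Poss, At])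
    (by simp [regress, Poss, At, Connected, Risky, VulF, doAct])

theorem causes_VulF_sigma1 {a : SysAct} {ts : ℕ} (h : Causes a ts VulF sigma1) :
    (a = .move .I1 .I2 .Vul ∧ ts = 2) ∨ (a = .move .I0 .I1 .NotVul ∧ ts = 1) := by
  refine (h.eq_or_causes_regress causesDirectly_VulF_sigma1).imp_right fun h₁ => ?_
  refine (h₁.eq_or_causes_regress causesDirectly_regress_VulF).resolve_right ?_
  exact not_causes_singleton (by simp [regress, Poss, At, Connected, Risky, VulF, doAct])

theorem robot_causes_sigma1 :
    ¬ Causes (.comm .I0 .Succ) 0 VulF sigma1 ∧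
    Causes (.move .I0 .I1 .NotVul) 1 VulF sigma1 ∧
    Causes (.move .I1 .I2 .Vul) 2 VulF sigma1 ∧
    ¬ Causes (.move .I2 .I3 .NotVul) 3 VulF sigma1 := by
  refine ⟨fun h => ?_, ?_, .direct causesDirectly_VulF_sigma1, fun h => ?_⟩
  · rcases causes_VulF_sigma1 h with ⟨h, -⟩ | ⟨h, -⟩ <;> cases h
  · exact .indirect _ 2 _ causesDirectly_VulF_sigma1 rfl
      ⟨⟨[.move .I2 .I3 .NotVul, .move .I1 .I2 .Vul], rfl⟩, by simp [sigma1]⟩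
      (.direct causesDirectly_regress_VulF)
  · rcases causes_VulF_sigma1 h with ⟨h, -⟩ | ⟨h, -⟩ <;> cases h
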